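/- Uncorrelatedness of level-difference terms: for 1 ≤ l < m ≤ L−1, Cov(P_l^{(N_l)} − P_l^{(N_{l+1})}, P_m^{(N_m)} − P_m^{(N_{m+1})}) = 0. -/

import Mathlib

open MeasureTheory ProbabilityTheory Finset

/-- Sample mean of the first `n` samples of the sequence `X`. -/
noncomputable def sampleMean {Ω : Type} (n : ℕ) (X : ℕ → Ω → ℝ) : Ω → ℝ :=
  fun ω => (n : ℝ)⁻¹ * ∑ j ∈ Finset.range n, X j ω

/-- Covariance of two real random variables. -/
noncomputable def covar {Ω : Type} [MeasurableSpace Ω] (μ : Measure Ω) (X Y : Ω → ℝ) : ℝ :=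
  ∫ ω, (X ω - μ[X]) * (Y ω - μ[Y]) ∂μ

/-!
Within an i.i.d. sequence, `Cov(Z_j[l], Z_k[m])` vanishes for `j ≠ k` and is a constant `c`
for `j = k`. Bilinearity then gives `Cov(P_l^{(n)}, P_m^{(n')}) = c / n` whenever
`1 ≤ n' ≤ n`: only the `n'` diagonal pairs survive. Since `N_{m+1} ≤ N_m ≤ N_{l+1} ≤ N_l`,
the four terms of the covariance of the two level differences are
`c / N_l - c / N_l - c / N_{l+1} + c / N_{l+1} = 0`.
-/

lemma covar_eq_covariance {Ω : Type} [MeasurableSpace Ω] (μ : Measure Ω) (X Y : Ω → ℝ) :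
    covar μ X Y = cov[X, Y; μ] :=
  rfl

lemma Nat.antitoneOn_Icc_of_succ_le {α : Type*} [Preorder α] {f : ℕ → α} {a b : ℕ}
    (hf : ∀ n ∈ Finset.Icc a (b - 1), f (n + 1) ≤ f n) : AntitoneOn f (Set.Icc a b) := by
  refine antitoneOn_of_succ_le Set.ordConnected_Icc fun n _ hn hn' => ?_
  rw [Order.succ_eq_add_one] at hn' ⊢
  exact hf n (by simp only [Finset.mem_Icc, Set.mem_Icc] at hn hn' ⊢; omega)

lemma ProbabilityTheory.IdentDistrib.covariance_comp_eq {Ω Ω' E : Type*}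
    [MeasurableSpace Ω] [MeasurableSpace Ω'] [MeasurableSpace E] {μ : Measure Ω}
    {ν : Measure Ω'} {Z : Ω → E} {Z' : Ω' → E}
    (h : IdentDistrib Z Z' μ ν) {f g : E → ℝ} (hf : Measurable f) (hg : Measurable g) :
    cov[f ∘ Z, g ∘ Z; μ] = cov[f ∘ Z', g ∘ Z'; ν] := by
  rw [← covariance_map hf.aestronglyMeasurable hg.aestronglyMeasurable h.aemeasurable_fst,
    h.map_eq, covariance_map hf.aestronglyMeasurable hg.aestronglyMeasurable h.aemeasurable_snd]

lemma covariance_comp_of_iIndepFun_of_identDistrib {Ω ι E : Type*} [MeasurableSpace Ω]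
    [MeasurableSpace E] [DecidableEq ι] {μ : Measure Ω} {Z : ι → Ω → E}
    (hindep : iIndepFun Z μ) (i₀ : ι)
    (hident : ∀ j, IdentDistrib (Z j) (Z i₀) μ μ) {f g : E → ℝ}
    (hf : Measurable f) (hg : Measurable g)
    (hfL2 : ∀ j, MemLp (f ∘ Z j) 2 μ) (hgL2 : ∀ j, MemLp (g ∘ Z j) 2 μ) (j k : ι) :
    cov[f ∘ Z j, g ∘ Z k; μ] = if j = k then cov[f ∘ Z i₀, g ∘ Z i₀; μ] else 0 := by
  split_ifs with hjk
  · subst hjk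
    exact (hident j).covariance_comp_eq hf hg
  · exact ((hindep.indepFun hjk).comp hf hg).covariance_eq_zero (hfL2 j) (hgL2 k)

section SampleMean

variable {Ω : Type} [MeasurableSpace Ω] {μ : Measure Ω}

lemma memLp_sampleMean {p : ENNReal} {X : ℕ → Ω → ℝ} (hX : ∀ j, MemLp (X j) p μ)
    (n : ℕ) :
    MemLp (sampleMean n X) p μ :=
  (memLp_finsetSum (range n) fun j _ => hX j).const_mul _

lemma covariance_sampleMean_sampleMean [IsFiniteMeasure μ] {X Y : ℕ → Ω → ℝ} {c : ℝ}
    (hX : ∀ j, MemLp (X j) 2 μ) (hY : ∀ j, MemLp (Y j) 2 μ)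
    (hXY : ∀ j k, cov[X j, Y k; μ] = if j = k then c else 0)
    {n n' : ℕ} (hn : n' ≤ n) (hn' : n' ≠ 0) :
    cov[sampleMean n X, sampleMean n' Y; μ] = c / n := by
  have hdiag : ∑ j ∈ range n, ∑ k ∈ range n', cov[X j, Y k; μ] = n' * c := by
    rw [Finset.sum_comm]
    simp only [hXY, Finset.sum_ite_eq', Finset.mem_range]
    rw [Finset.sum_congr rfl fun k hk => if_pos ((Finset.mem_range.1 hk).trans_le hn)]
    simp
  unfold sampleMean
  rw [covariance_const_mul_left, covariance_const_mul_right,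
    covariance_fun_sum_fun_sum' (fun j _ => hX j) (fun k _ => hY k), hdiag]
  field_simp

end SampleMean

theorem stmt_10_general
    {Ω : Type} [MeasurableSpace Ω] (μ : Measure Ω) [IsProbabilityMeasure μ]
    (L : ℕ)
    (Z : ℕ → Ω → ℕ → ℝ)
    (hindep : iIndepFun Z μ)
    (hident : ∀ j, IdentDistrib (Z j) (Z 0) μ μ)
    (hL2 : ∀ j, ∀ l ∈ Finset.Icc 1 L, MemLp (fun ω => Z j ω l) 2 μ)
    (N : ℕ → ℕ)
    (hNnest : ∀ l ∈ Finset.Icc 1 (L - 1), N (l + 1) ≤ N l)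
    (hNLpos : 1 ≤ N L)
    (l m : ℕ) (hl : 1 ≤ l) (hlm : l < m) (hm : m ≤ L - 1) :
    covar μ
        (fun ω => sampleMean (N l) (fun j ω' => Z j ω' l) ω
          - sampleMean (N (l + 1)) (fun j ω' => Z j ω' l) ω)
        (fun ω => sampleMean (N m) (fun j ω' => Z j ω' m) ω
          - sampleMean (N (m + 1)) (fun j ω' => Z j ω' m) ω)
      = 0 := by
  have hN := Nat.antitoneOn_Icc_of_succ_le hNnest
  have hlL : l ∈ Icc 1 L := by simp only [Finset.mem_Icc]; omega
  have hmL : m ∈ Icc 1 L := by simp only [Finset.mem_Icc]; omega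
  have hXY : ∀ j k, cov[fun ω => Z j ω l, fun ω => Z k ω m; μ]
      = if j = k then cov[fun ω => Z 0 ω l, fun ω => Z 0 ω m; μ] else 0 :=
    covariance_comp_of_iIndepFun_of_identDistrib hindep 0 hident
      (measurable_pi_apply l) (measurable_pi_apply m) (fun j => hL2 j l hlL)
      (fun j => hL2 j m hmL)
  have hNm₁ : N (m + 1) ≤ N m := hN ⟨by omega, by omega⟩ ⟨by omega, by omega⟩ (by omega)
  have hNm : N m ≤ N (l + 1) := hN ⟨by omega, by omega⟩ ⟨by omega, by omega⟩ (by omega)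
  have hNl : N (l + 1) ≤ N l := hN ⟨by omega, by omega⟩ ⟨by omega, by omega⟩ (by omega)
  have hNm₁pos : N (m + 1) ≠ 0 := by
    have := hN ⟨by omega, by omega⟩ ⟨by omega, le_rfl⟩ (by omega : m + 1 ≤ L)
    omega
  have hX := fun j => hL2 j l hlL
  have hY := fun j => hL2 j m hmL
  rw [covar_eq_covariance, covariance_fun_sub_fun_sub (memLp_sampleMean hX _)
      (memLp_sampleMean hX _) (memLp_sampleMean hY _) (memLp_sampleMean hY _),
    covariance_sampleMean_sampleMean hX hY hXY (hNm.trans hNl) (by omega),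
    covariance_sampleMean_sampleMean hX hY hXY (hNm₁.trans (hNm.trans hNl)) hNm₁pos,
    covariance_sampleMean_sampleMean hX hY hXY hNm (by omega),
    covariance_sampleMean_sampleMean hX hY hXY (hNm₁.trans hNm) hNm₁pos]
  ring

/-- uncorrelatedness of level-difference terms: for `1 ≤ l < m ≤ L−1`,
`Cov(P_l^{(N_l)} − P_l^{(N_{l+1})}, P_m^{(N_m)} − P_m^{(N_{m+1})}) = 0`. -/
theorem stmt_10
    {Ω : Type} [MeasurableSpace Ω] (μ : Measure Ω) [IsProbabilityMeasure μ]
    (L : ℕ) (hL : 1 ≤ L)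
    (Z : ℕ → Ω → ℕ → ℝ)
    (hmeas : ∀ j, Measurable (Z j))
    (hindep : iIndepFun Z μ)
    (hident : ∀ j, IdentDistrib (Z j) (Z 0) μ μ)
    (hL2 : ∀ j, ∀ l ∈ Finset.Icc 1 L, MemLp (fun ω => Z j ω l) 2 μ)
    (N : ℕ → ℕ)
    (hNnest : ∀ l ∈ Finset.Icc 1 (L - 1), N (l + 1) ≤ N l)
    (hNLpos : 1 ≤ N L)
    (l m : ℕ) (hl : 1 ≤ l) (hlm : l < m) (hm : m ≤ L - 1) :
    covar μ
        (fun ω => sampleMean (N l) (fun j ω' => Z j ω' l) ω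
          - sampleMean (N (l + 1)) (fun j ω' => Z j ω' l) ω)
        (fun ω => sampleMean (N m) (fun j ω' => Z j ω' m) ω
          - sampleMean (N (m + 1)) (fun j ω' => Z j ω' m) ω)
      = 0 :=
  stmt_10_general μ L Z hindep hident hL2 N hNnest hNLpos l m hl hlm hm
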